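/- The following identity holds: Σ_{n=0}^{∞} Σ_{m=0}^{∞} Σ_{j=0}^{n} (n+m)! / (m! · j! · (m+2n+1−j)!) · 2^{−n} = √(2π) · e² · (Φ(2) − Φ(1)), where Φ is the standard normal cumulative distribution function. -/

import Mathlib

/-!
By the Beta integral `∫₀¹ tᵃ (1 - t)ᵇ dt = a! b! / (a + b + 1)!`, after expanding `(1 + t)ⁿ`
binomially, the `(n, m)` term of the series is `∫₀¹ (1 - t)ᵐ / m! · ((1 - t²) / 2)ⁿ / n! dt`.
Summing the exponential series first in `m`, then in `n`, under the integral leaves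
`∫₀¹ e^(1 - t) e^((1 - t²) / 2) dt`, and `1 - t + (1 - t²) / 2 = 2 - (t + 1)² / 2`, so this is
`e² ∫₁² e^(-s² / 2) ds`.
-/

open MeasureTheory

/-- The standard normal cumulative distribution function. -/
noncomputable def gaussCdf (t : ℝ) : ℝ :=
  ∫ s in Set.Iic t, Real.exp (-s ^ 2 / 2) / Real.sqrt (2 * Real.pi)

open scoped Nat

theorem integral_pow_mul_one_sub_pow (a b : ℕ) :
    ∫ t in (0 : ℝ)..1, t ^ a * (1 - t) ^ b = a ! * b ! / (a + b + 1)! := by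
  induction b generalizing a with
  | zero =>
    simp only [pow_zero, mul_one, integral_pow, one_pow, Nat.factorial_zero, add_zero,
      Nat.factorial_succ]
    push_cast
    field_simp
    ring
  | succ b ih =>
    have hu : ∀ t ∈ Set.uIcc (0 : ℝ) 1,
        HasDerivAt (fun t : ℝ => (1 - t) ^ (b + 1)) (-((b + 1) * (1 - t) ^ b)) t := by
      intro t _
      simpa using ((hasDerivAt_id t).const_sub 1).fun_pow (b + 1)
    have hv : ∀ t ∈ Set.uIcc (0 : ℝ) 1,
        HasDerivAt (fun t : ℝ => t ^ (a + 1)) ((a + 1) * t ^ a) t := by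
      intro t _
      simpa using hasDerivAt_pow (a + 1) t
    have parts := intervalIntegral.integral_mul_deriv_eq_deriv_mul hu hv
      (Continuous.intervalIntegrable (by fun_prop) _ _)
      (Continuous.intervalIntegrable (by fun_prop) _ _)
    have lhs : ∫ t in (0 : ℝ)..1, (1 - t) ^ (b + 1) * ((a + 1) * t ^ a) =
        (a + 1) * ∫ t in (0 : ℝ)..1, t ^ a * (1 - t) ^ (b + 1) := by
      rw [← intervalIntegral.integral_const_mul]
      exact intervalIntegral.integral_congr fun t _ => by ring
    have rhs : ∫ t in (0 : ℝ)..1, -((b + 1) * (1 - t) ^ b) * t ^ (a + 1) =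
        -((b + 1) * ∫ t in (0 : ℝ)..1, t ^ (a + 1) * (1 - t) ^ b) := by
      rw [← intervalIntegral.integral_const_mul, ← intervalIntegral.integral_neg]
      exact intervalIntegral.integral_congr fun t _ => by ring
    rw [lhs, rhs, ih, sub_self, zero_pow (Nat.succ_ne_zero b), zero_pow (Nat.succ_ne_zero a),
      show a + 1 + b + 1 = a + (b + 1) + 1 by omega] at parts
    refine mul_left_cancel₀ (by positivity : (a + 1 : ℝ) ≠ 0) ?_
    rw [parts]
    push_cast [Nat.factorial_succ]
    ring

theorem intervalIntegral.hasSum_integral_pow_div_factorial_mul {f g : ℝ → ℝ} {a b : ℝ}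
    (hf : ContinuousOn f (Set.uIcc a b)) (hg : ContinuousOn g (Set.uIcc a b)) :
    HasSum (fun k : ℕ => ∫ t in a..b, f t ^ k / k ! * g t) (∫ t in a..b, Real.exp (f t) * g t) := by
  obtain ⟨M, hM⟩ := isCompact_uIcc.exists_bound_of_continuousOn hf
  obtain ⟨K, hK⟩ := isCompact_uIcc.exists_bound_of_continuousOn hg
  refine intervalIntegral.hasSum_integral_of_dominated_convergence (fun k _ => M ^ k / k ! * K)
    (fun k => (((hf.pow k).div_const _).mul hg).aestronglyMeasurable measurableSet_uIcc
      |>.mono_set Set.uIoc_subset_uIcc) (fun k => ae_of_all _ fun t ht => ?_)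
    (ae_of_all _ fun _ _ => (Real.summable_pow_div_factorial M).mul_right K)
    intervalIntegrable_const (ae_of_all _ fun t _ => ?_)
  · have ht := Set.uIoc_subset_uIcc ht
    rw [norm_mul, norm_div, norm_pow, Real.norm_natCast]
    have hM0 : 0 ≤ M := (norm_nonneg _).trans (hM t ht)
    gcongr
    exacts [hM t ht, hK t ht]
  · rw [Real.exp_eq_exp_ℝ]
    exact (NormedSpace.expSeries_div_hasSum_exp (f t)).mul_right (g t)

theorem sum_factorial_div_eq_integral (n m : ℕ) :
    (∑ j ∈ Finset.range (n + 1), ((n + m)! : ℝ) / (m ! * j ! * (m + 2 * n + 1 - j)!)) *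
        ((2 : ℝ) ^ n)⁻¹ =
      ∫ t in (0 : ℝ)..1, (1 - t) ^ m / m ! * (((1 + t) * (1 - t) / 2) ^ n / n !) := by
  have expand : ∀ t : ℝ, (1 - t) ^ m / m ! * (((1 + t) * (1 - t) / 2) ^ n / n !) =
      ∑ j ∈ Finset.range (n + 1),
        n.choose j / (m ! * n ! * 2 ^ n) * (t ^ (n - j) * (1 - t) ^ (n + m)) := by
    intro t
    calc (1 - t) ^ m / m ! * (((1 + t) * (1 - t) / 2) ^ n / n !)
        = (1 + t) ^ n * (1 - t) ^ (n + m) / (m ! * n ! * 2 ^ n) := by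
          rw [div_pow, mul_pow, pow_add]
          field_simp
      _ = _ := by
          rw [add_pow, Finset.sum_mul, Finset.sum_div]
          exact Finset.sum_congr rfl fun j _ => by ring
  simp only [expand]
  rw [intervalIntegral.integral_finsetSum
    fun j _ => Continuous.intervalIntegrable (by fun_prop) _ _, Finset.sum_mul]
  refine Finset.sum_congr rfl fun j hj => ?_
  have hjn : j ≤ n := Nat.lt_succ_iff.mp (Finset.mem_range.mp hj)
  rw [intervalIntegral.integral_const_mul, integral_pow_mul_one_sub_pow,
    show n - j + (n + m) + 1 = m + 2 * n + 1 - j by omega]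
  have hchoose : (n.choose j : ℝ) * j ! * (n - j)! = n ! := by
    exact_mod_cast Nat.choose_mul_factorial_mul_factorial hjn
  have hchoose_ne := (Nat.choose_pos hjn).ne'
  rw [← hchoose]
  field_simp

theorem hasSum_sum_factorial_div (n : ℕ) :
    HasSum (fun m : ℕ => (∑ j ∈ Finset.range (n + 1),
        ((n + m)! : ℝ) / (m ! * j ! * (m + 2 * n + 1 - j)!)) * ((2 : ℝ) ^ n)⁻¹)
      (∫ t in (0 : ℝ)..1, ((1 + t) * (1 - t) / 2) ^ n / n ! * Real.exp (1 - t)) := by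
  simpa only [sum_factorial_div_eq_integral, mul_comm (Real.exp (1 - _))] using
    intervalIntegral.hasSum_integral_pow_div_factorial_mul (f := fun t => 1 - t)
      (g := fun t => ((1 + t) * (1 - t) / 2) ^ n / n !) (a := 0) (b := 1)
      (by fun_prop) (by fun_prop)

theorem gaussCdf_sub_gaussCdf (a b : ℝ) :
    gaussCdf b - gaussCdf a = (∫ s in a..b, Real.exp (-s ^ 2 / 2)) / Real.sqrt (2 * Real.pi) := by
  have hint : Integrable fun s : ℝ => Real.exp (-s ^ 2 / 2) / Real.sqrt (2 * Real.pi) := by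
    simpa [div_eq_inv_mul, ← neg_mul] using
      (integrable_exp_neg_mul_sq (b := 1 / 2) (by norm_num)).div_const (Real.sqrt (2 * Real.pi))
  rw [gaussCdf, gaussCdf, intervalIntegral.integral_Iic_sub_Iic hint.integrableOn hint.integrableOn,
    intervalIntegral.integral_div]

/-- The identity
`Σ_{n=0}^∞ Σ_{m=0}^∞ Σ_{j=0}^n (n+m)!/(m!·j!·(m+2n+1−j)!)·2^{−n} = √(2π)·e²·(Φ(2) − Φ(1))`. -/
theorem triple_sum_identity :
    ∑' n : ℕ, ∑' m : ℕ,
        (∑ j ∈ Finset.range (n + 1),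
          ((n + m).factorial : ℝ) /
            (m.factorial * j.factorial * (m + 2 * n + 1 - j).factorial)) * ((2 : ℝ) ^ n)⁻¹ =
      Real.sqrt (2 * Real.pi) * Real.exp 2 * (gaussCdf 2 - gaussCdf 1) := by
  rw [tsum_congr fun n => (hasSum_sum_factorial_div n).tsum_eq,
    (intervalIntegral.hasSum_integral_pow_div_factorial_mul (f := fun t => (1 + t) * (1 - t) / 2)
      (g := fun t => Real.exp (1 - t)) (a := 0) (b := 1) (by fun_prop) (by fun_prop)).tsum_eq,
    gaussCdf_sub_gaussCdf]
  calc ∫ t in (0 : ℝ)..1, Real.exp ((1 + t) * (1 - t) / 2) * Real.exp (1 - t)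
      = ∫ t in (0 : ℝ)..1, Real.exp 2 * Real.exp (-(t + 1) ^ 2 / 2) :=
        intervalIntegral.integral_congr fun t _ => by
          rw [← Real.exp_add, ← Real.exp_add]; congr 1; ring
    _ = Real.exp 2 * ∫ s in (1 : ℝ)..2, Real.exp (-s ^ 2 / 2) := by
        rw [intervalIntegral.integral_const_mul,
          intervalIntegral.integral_comp_add_right (fun s => Real.exp (-s ^ 2 / 2))]
        norm_num
    _ = _ := by field_simp
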